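/- arXiv:2503.00406 — 2 statements merged into one kernel-verified Lean document; each statement's English description precedes it below -/
import Mathlib

section
/- For the cycle C_m (m ≥ 3): χ_{n,k}(C_m) = 2 if gcd(3,n) | k and m is even; χ_{n,k}(C_m) = 3 if gcd(3,n) | k and m is odd, or if gcd(3,n) ∤ k and 3 | m; and χ_{n,k}(C_m) does not exist if gcd(3,n) ∤ k and 3 ∤ m. -/
open SimpleGraph

def ClosedColoring {V : Type*} (G : SimpleGraph V) [G.LocallyFinite]
    (n k : ℤ) (ℓ : V → ℤ) : Prop :=
  ∀ v : V, (ℓ v + ∑ u ∈ G.neighborFinset v, ℓ u) ≡ k [ZMOD n]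

def ProperLabeling {V : Type*} (G : SimpleGraph V) (ℓ : V → ℤ) : Prop :=
  ∀ ⦃v w : V⦄, G.Adj v w → ℓ v ≠ ℓ w

def HasClosedChrom {V : Type*} (G : SimpleGraph V) [G.LocallyFinite]
    (n k : ℤ) (c : ℕ) : Prop :=
  (∃ ℓ : V → ℤ, ProperLabeling G ℓ ∧ ClosedColoring G n k ℓ ∧
      (Set.range ℓ).Finite ∧ (Set.range ℓ).ncard = c) ∧
  ∀ ℓ : V → ℤ, ProperLabeling G ℓ → ClosedColoring G n k ℓ →
      (Set.range ℓ).Finite → c ≤ (Set.range ℓ).ncard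

noncomputable instance (m : ℕ) : (cycleGraph m).LocallyFinite :=
  fun _ => (Set.toFinite _).fintype

/-! On a cycle the closed-neighbourhood sum at `v` is `ℓ (v - 1) + ℓ v + ℓ (v + 1)`; subtracting
the sums at two consecutive vertices shows that a closed labeling is `3`-periodic modulo `n`,
while a proper labeling with only two values is `2`-periodic. If `3 ∤ m`, or if only two values
are used, the labeling is therefore constant modulo `n`, say `≡ x`, and `3 x ≡ k` forces
`gcd 3 n ∣ k`; a `2`-periodic proper labeling of an odd cycle cannot exist at all.
Conversely, when `3 x ≡ k` the labels `x + n c v` for a proper `2`- or `3`-colouring `c` work,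
and when `3 ∣ m` one can repeat three distinct integers with sum `k` around the cycle. -/

open Function Fin.CommRing

theorem Int.natCast_gcd_dvd_iff_exists_mul_modEq {a k : ℤ} {n : ℕ} :
    (Int.gcd a n : ℤ) ∣ k ↔ ∃ x, a * x ≡ k [ZMOD n] := by
  simp_rw [Int.coe_gcd, gcd_dvd_iff_exists, Int.modEq_iff_add_fac]

theorem Function.Periodic.eq_of_coprime {β : Type*} {m d : ℕ} [NeZero m] {f : Fin m → β}
    (hf : Periodic f (d : Fin m)) (hd : d.Coprime m) (v w : Fin m) : f v = f w := by
  rcases (NeZero.one_le : 1 ≤ m).eq_or_lt with rfl | hm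
  · exact congrArg f (Subsingleton.elim v w)
  obtain ⟨t, -, ht⟩ := Nat.exists_mul_mod_eq_one_of_coprime hd hm
  have hdt : (t : Fin m) * d = 1 := by
    rw [← Nat.cast_mul, mul_comm]
    exact Fin.ext (by rw [Fin.val_natCast, ht, Fin.val_one', Nat.mod_eq_of_lt hm])
  have h1 : Periodic f 1 := by simpa only [nsmul_eq_mul, hdt] using hf.nsmul t
  simpa using (h1.nsmul (w - v).val v).symm

section Labeling

variable {V : Type*} {G : SimpleGraph V} {ℓ : V → ℤ}

theorem ProperLabeling.two_le_ncard_range (hℓ : ProperLabeling G ℓ) (hfin : (Set.range ℓ).Finite)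
    {v w : V} (hvw : G.Adj v w) : 2 ≤ (Set.range ℓ).ncard :=
  (Set.one_lt_ncard hfin).2 ⟨_, ⟨v, rfl⟩, _, ⟨w, rfl⟩, hℓ hvw⟩

theorem SimpleGraph.Coloring.properLabeling_comp {α : Type*} (c : G.Coloring α) {f : α → ℤ}
    (hf : Injective f) : ProperLabeling G (f ∘ c) :=
  fun _ _ h => hf.ne (c.valid h)

theorem SimpleGraph.Coloring.ncard_range_comp {α : Type*} (c : G.Coloring α) (hc : Surjective c)
    {f : α → ℤ} (hf : Injective f) : (Set.range (f ∘ c)).ncard = Nat.card α := by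
  rw [hc.range_comp, Set.ncard_range_of_injective hf]

theorem hasClosedChrom_of_finite [Finite V] [G.LocallyFinite] {n k : ℤ} {c : ℕ}
    (hex : ∃ ℓ : V → ℤ, ProperLabeling G ℓ ∧ ClosedColoring G n k ℓ ∧ (Set.range ℓ).ncard = c)
    (hle : ∀ ℓ : V → ℤ, ProperLabeling G ℓ → ClosedColoring G n k ℓ → c ≤ (Set.range ℓ).ncard) :
    HasClosedChrom G n k c := by
  obtain ⟨ℓ, hℓ, hc, hcard⟩ := hex
  exact ⟨⟨ℓ, hℓ, hc, Set.toFinite _, hcard⟩, fun ℓ hℓ hc _ => hle ℓ hℓ hc⟩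

end Labeling

section Cycle

variable {m : ℕ} [NeZero m]

theorem cycleGraph_adj_add_one (hm : 2 ≤ m) (v : Fin m) : (cycleGraph m).Adj v (v + 1) := by
  rw [cycleGraph_adj']
  right
  simp [Nat.mod_eq_of_lt hm]

theorem cycleGraph_neighborFinset_eq (hm : 2 ≤ m) (v : Fin m) :
    (cycleGraph m).neighborFinset v = {v - 1, v + 1} := by
  obtain ⟨m, rfl⟩ := Nat.exists_eq_add_of_le' hm
  convert cycleGraph_neighborFinset

theorem closedColoring_cycleGraph_iff (hm : 3 ≤ m) {n k : ℤ} {ℓ : Fin m → ℤ} :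
    ClosedColoring (cycleGraph m) n k ℓ ↔ ∀ v, ℓ (v - 1) + ℓ v + ℓ (v + 1) ≡ k [ZMOD n] := by
  have hne (v : Fin m) : v - 1 ≠ v + 1 := by
    intro h
    have h2 : (2 : Fin m) = 0 := by linear_combination -h
    simp [Fin.ext_iff, Nat.mod_eq_of_lt (show 2 < m by omega)] at h2
  refine forall_congr' fun v => ?_
  rw [cycleGraph_neighborFinset_eq (by omega), Finset.sum_pair (hne v), add_left_comm, add_assoc]

theorem ClosedColoring.periodic_three (hm : 3 ≤ m) {n : ℕ} {k : ℤ} {ℓ : Fin m → ℤ}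
    (hc : ClosedColoring (cycleGraph m) n k ℓ) : Periodic (fun v => (ℓ v : ZMod n)) 3 := by
  intro v
  have h1 := (closedColoring_cycleGraph_iff hm).1 hc (v + 1)
  have h2 := (closedColoring_cycleGraph_iff hm).1 hc (v + 2)
  rw [← ZMod.intCast_eq_intCast_iff] at h1 h2
  push_cast at h1 h2
  ring_nf at h1 h2 ⊢
  linear_combination h2 - h1

theorem ClosedColoring.gcd_dvd_of_forall_eq (hm : 3 ≤ m) {n : ℕ} {k : ℤ} {ℓ : Fin m → ℤ}
    (hc : ClosedColoring (cycleGraph m) n k ℓ) (hconst : ∀ v w, (ℓ v : ZMod n) = ℓ w) :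
    (Int.gcd 3 n : ℤ) ∣ k := by
  refine Int.natCast_gcd_dvd_iff_exists_mul_modEq.2 ⟨ℓ 0, ?_⟩
  have h := (closedColoring_cycleGraph_iff hm).1 hc 0
  rw [← ZMod.intCast_eq_intCast_iff] at h ⊢
  push_cast at h ⊢
  rw [hconst (0 - 1) 0, hconst (0 + 1) 0] at h
  linear_combination h

theorem ClosedColoring.gcd_dvd_of_not_three_dvd (hm : 3 ≤ m) (h3 : ¬ 3 ∣ m) {n : ℕ} {k : ℤ}
    {ℓ : Fin m → ℤ} (hc : ClosedColoring (cycleGraph m) n k ℓ) : (Int.gcd 3 n : ℤ) ∣ k :=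
  have hper : Periodic (fun v => (ℓ v : ZMod n)) (3 : ℕ) := by simpa using hc.periodic_three hm
  hc.gcd_dvd_of_forall_eq hm <|
    hper.eq_of_coprime ((Nat.Prime.coprime_iff_not_dvd Nat.prime_three).2 h3)

theorem ProperLabeling.periodic_two_of_ncard_range_le_two (hm : 3 ≤ m) {ℓ : Fin m → ℤ}
    (hℓ : ProperLabeling (cycleGraph m) ℓ) (h2 : (Set.range ℓ).ncard ≤ 2) : Periodic ℓ 2 := by
  intro v
  have hadj₁ := cycleGraph_adj_add_one (by omega) v
  have hadj₂ := cycleGraph_adj_add_one (by omega) (v + 1)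
  by_contra hne
  have h3 : ({ℓ v, ℓ (v + 1), ℓ (v + 2)} : Set ℤ).ncard = 3 := by
    rw [Set.ncard_eq_three]
    refine ⟨_, _, _, hℓ hadj₁, Ne.symm hne, ?_, rfl⟩
    simpa [add_assoc, one_add_one_eq_two] using hℓ hadj₂
  have hsub : ({ℓ v, ℓ (v + 1), ℓ (v + 2)} : Set ℤ) ⊆ Set.range ℓ := by
    rintro _ (rfl | rfl | rfl) <;> exact ⟨_, rfl⟩
  have := Set.ncard_le_ncard hsub (Set.toFinite _)
  omega

theorem ProperLabeling.three_le_ncard_range_of_odd (hm : 3 ≤ m) (hmo : Odd m) {ℓ : Fin m → ℤ}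
    (hℓ : ProperLabeling (cycleGraph m) ℓ) : 3 ≤ (Set.range ℓ).ncard := by
  by_contra! h
  have h2 : Periodic ℓ (2 : ℕ) := by simpa using hℓ.periodic_two_of_ncard_range_le_two hm (by omega)
  exact hℓ (cycleGraph_adj_add_one (by omega) 0) (h2.eq_of_coprime (Nat.coprime_two_left.2 hmo) _ _)

theorem ProperLabeling.three_le_ncard_range_of_not_gcd_dvd (hm : 3 ≤ m) {n : ℕ} {k : ℤ}
    (hk : ¬ (Int.gcd 3 n : ℤ) ∣ k) {ℓ : Fin m → ℤ} (hℓ : ProperLabeling (cycleGraph m) ℓ)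
    (hc : ClosedColoring (cycleGraph m) n k ℓ) : 3 ≤ (Set.range ℓ).ncard := by
  by_contra! h
  have h2 := (hℓ.periodic_two_of_ncard_range_le_two hm (by omega)).comp (Int.cast : ℤ → ZMod n)
  have h1 : Periodic (fun v => (ℓ v : ZMod n)) ((1 : ℕ) : Fin m) := by
    simpa [show (3 : Fin m) - 2 = 1 by ring] using (hc.periodic_three hm).sub_period h2
  exact hk (hc.gcd_dvd_of_forall_eq hm (h1.eq_of_coprime (Nat.coprime_one_left m)))

theorem exists_closedColoring_of_coloring (hm : 3 ≤ m) {α : Type*}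
    (c : (cycleGraph m).Coloring α) (hc : Surjective c) {g : α → ℕ} (hg : Injective g)
    {n : ℕ} (hn : n ≠ 0) {k : ℤ} (hk : (Int.gcd 3 n : ℤ) ∣ k) :
    ∃ ℓ : Fin m → ℤ, ProperLabeling (cycleGraph m) ℓ ∧ ClosedColoring (cycleGraph m) n k ℓ ∧
      (Set.range ℓ).ncard = Nat.card α := by
  obtain ⟨x, hx⟩ := Int.natCast_gcd_dvd_iff_exists_mul_modEq.1 hk
  set f : α → ℤ := fun a => x + n * g a
  have hf : Injective f := fun a b h => hg (by simpa [f, hn] using h)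
  have hfx (a : α) : f a ≡ x [ZMOD n] := Int.modEq_add_fac_self
  refine ⟨f ∘ c, c.properLabeling_comp hf, (closedColoring_cycleGraph_iff hm).2 fun v => ?_,
    c.ncard_range_comp hc hf⟩
  calc f (c (v - 1)) + f (c v) + f (c (v + 1)) ≡ x + x + x [ZMOD n] :=
        ((hfx _).add (hfx _)).add (hfx _)
    _ = 3 * x := by ring
    _ ≡ k [ZMOD n] := hx

theorem exists_closedColoring_two_of_even (hm : 3 ≤ m) (hme : Even m) {n : ℕ} (hn : n ≠ 0)
    {k : ℤ} (hk : (Int.gcd 3 n : ℤ) ∣ k) :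
    ∃ ℓ : Fin m → ℤ, ProperLabeling (cycleGraph m) ℓ ∧ ClosedColoring (cycleGraph m) n k ℓ ∧
      (Set.range ℓ).ncard = 2 := by
  have hc : Surjective (cycleGraph.bicoloring_of_even m hme) := by
    rintro (_ | _)
    · exact ⟨1, by simp [cycleGraph.bicoloring_of_even, Coloring.mk, RelHom.coeFn_mk,
        Nat.mod_eq_of_lt (show 1 < m by omega)]⟩
    · exact ⟨0, by simp [cycleGraph.bicoloring_of_even, Coloring.mk, RelHom.coeFn_mk]⟩
  have hg : Injective Bool.toNat := by decide
  simpa using exists_closedColoring_of_coloring hm _ hc hg hn hk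

theorem exists_closedColoring_three (hm : 3 ≤ m) {n : ℕ} (hn : n ≠ 0)
    {k : ℤ} (hk : (Int.gcd 3 n : ℤ) ∣ k) :
    ∃ ℓ : Fin m → ℤ, ProperLabeling (cycleGraph m) ℓ ∧ ClosedColoring (cycleGraph m) n k ℓ ∧
      (Set.range ℓ).ncard = 3 := by
  have hc : Surjective (cycleGraph.tricoloring m (by omega)) := by
    intro a
    fin_cases a
    · refine ⟨0, ?_⟩
      simp only [cycleGraph.tricoloring, Coloring.mk, RelHom.coeFn_mk]
      exact if_neg (by simp; omega)
    · exact ⟨1, by simp [cycleGraph.tricoloring, Coloring.mk, RelHom.coeFn_mk,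
        Nat.mod_eq_of_lt (show 1 < m by omega)]; omega⟩
    · exact ⟨⟨m - 1, by omega⟩, by simp [cycleGraph.tricoloring, Coloring.mk, RelHom.coeFn_mk]⟩
  simpa using exists_closedColoring_of_coloring hm _ hc Fin.val_injective hn hk

theorem exists_closedColoring_three_of_three_dvd (hm : 3 ≤ m) (h3 : 3 ∣ m) (n k : ℤ) :
    ∃ ℓ : Fin m → ℤ, ProperLabeling (cycleGraph m) ℓ ∧ ClosedColoring (cycleGraph m) n k ℓ ∧
      (Set.range ℓ).ncard = 3 := by
  set c : Fin m → Fin 3 := fun v => ⟨v.val % 3, Nat.mod_lt _ three_pos⟩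
  have hc_add_one (v : Fin m) : c (v + 1) = c v + 1 := by
    ext
    simp only [c, Fin.val_add, Fin.val_one', Nat.mod_eq_of_lt (show 1 < m by omega),
      Nat.mod_mod_of_dvd _ h3]
    omega
  have hc_sub_one (v : Fin m) : c (v - 1) = c v - 1 := by
    rw [eq_sub_iff_add_eq, ← hc_add_one, sub_add_cancel]
  have hcol : ∀ {v w : Fin m}, (cycleGraph m).Adj v w → c v ≠ c w := by
    intro v w hvw
    have hshift : ∀ a : Fin 3, a ≠ a - 1 ∧ a ≠ a + 1 := by decide
    rw [← mem_neighborFinset, cycleGraph_neighborFinset_eq (by omega), Finset.mem_insert,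
      Finset.mem_singleton] at hvw
    rcases hvw with rfl | rfl
    · exact hc_sub_one v ▸ (hshift _).1
    · exact hc_add_one v ▸ (hshift _).2
  have hc : Surjective c := fun a => ⟨⟨a.val, by omega⟩, Fin.ext (by simp [c])⟩
  -- any three distinct integers with sum `k` will do
  set f : Fin 3 → ℤ := ![0, |k| + 1, k - |k| - 1]
  have hf : Injective f := by
    intro a b hab
    have := abs_nonneg k
    have := le_abs_self k
    fin_cases a <;> fin_cases b <;> simp [f] at hab ⊢ <;> omega
  have hsum (a : Fin 3) : f (a - 1) + f a + f (a + 1) = k := by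
    fin_cases a <;> simp [f]
  refine ⟨f ∘ c, (Coloring.mk c hcol).properLabeling_comp hf,
    (closedColoring_cycleGraph_iff hm).2 fun v => ?_, ?_⟩
  · simp only [comp_apply, hc_sub_one, hc_add_one, hsum]
    rfl
  · exact ((Coloring.mk c hcol).ncard_range_comp hc hf).trans (Nat.card_fin 3)

end Cycle

theorem chi_cycleGraph (k : ℤ) (n m : ℕ) (hn : 0 < n) (hm : 3 ≤ m) :
    ((Int.gcd 3 n : ℤ) ∣ k → Even m → HasClosedChrom (cycleGraph m) n k 2) ∧
    ((Int.gcd 3 n : ℤ) ∣ k → Odd m → HasClosedChrom (cycleGraph m) n k 3) ∧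
    (¬ (Int.gcd 3 n : ℤ) ∣ k → 3 ∣ m → HasClosedChrom (cycleGraph m) n k 3) ∧
    (¬ (Int.gcd 3 n : ℤ) ∣ k → ¬ 3 ∣ m →
      ¬ ∃ ℓ : Fin m → ℤ, ProperLabeling (cycleGraph m) ℓ ∧
        ClosedColoring (cycleGraph m) n k ℓ) := by
  have : NeZero m := ⟨by omega⟩
  refine ⟨fun hk hme => ?_, fun hk hmo => ?_, fun hk h3 => ?_, fun hk h3 ⟨ℓ, _, hc⟩ => ?_⟩
  · exact hasClosedChrom_of_finite (exists_closedColoring_two_of_even hm hme hn.ne' hk)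
      fun ℓ hℓ _ => hℓ.two_le_ncard_range (Set.toFinite _) (cycleGraph_adj_add_one (by omega) 0)
  · exact hasClosedChrom_of_finite (exists_closedColoring_three hm hn.ne' hk)
      fun ℓ hℓ _ => hℓ.three_le_ncard_range_of_odd hm hmo
  · exact hasClosedChrom_of_finite (exists_closedColoring_three_of_three_dvd hm h3 n k)
      fun ℓ hℓ hc => hℓ.three_le_ncard_range_of_not_gcd_dvd hm hk hc
  · exact hk (hc.gcd_dvd_of_not_three_dvd hm h3)
end

section
/- For the square lattice graph R_4 (the infinite 4-regular grid ℤ²), χ_{n,k}(R_4) = 2 if gcd(5,n) divides k, and χ_{n,k}(R_4) = 3 otherwise. -/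
/-!
Two labels can only be used by alternating them along the checkerboard colouring, and then
the closed neighbourhood sums at the two ends of an edge are `x + 4y` and `y + 4x`; adding
them gives `5 (x + y) ≡ 2k (mod n)`, which is impossible when `5 ∣ n` and `5 ∤ k`. Conversely,
labelling the checkerboard with `b` and `b + n` works as soon as `5 b ≡ k (mod n)` is solvable,
i.e. when `gcd(5, n) ∣ k`. In the remaining case the efficient dominating set
`{(x, y) | 5 ∣ x + 2y}` gets the label `k mod n` and the rest of the checkerboard the labels
`0` and `n`.
-/

open SimpleGraph

/-- The square tiling of the plane: the infinite 4-regular grid on ℤ². -/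
def gridGraph : SimpleGraph (ℤ × ℤ) :=
  SimpleGraph.fromRel (fun v w => (v.1 - w.1).natAbs + (v.2 - w.2).natAbs = 1)

noncomputable instance : gridGraph.LocallyFinite := fun v => by
  apply Set.Finite.fintype
  apply Set.Finite.subset
    ((((Set.finite_singleton ((v.1, v.2 - 1) : ℤ × ℤ)).insert (v.1, v.2 + 1)).insert
      (v.1 - 1, v.2)).insert (v.1 + 1, v.2))
  rintro ⟨w1, w2⟩ hw
  rw [SimpleGraph.mem_neighborSet, gridGraph, SimpleGraph.fromRel_adj] at hw
  have h : (v.1 - w1).natAbs + (v.2 - w2).natAbs = 1 := by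
    rcases hw.2 with h | h
    · exact h
    · omega
  have hcases : (w1 = v.1 + 1 ∧ w2 = v.2) ∨ (w1 = v.1 - 1 ∧ w2 = v.2) ∨
      (w1 = v.1 ∧ w2 = v.2 + 1) ∨ (w1 = v.1 ∧ w2 = v.2 - 1) := by omega
  rcases hcases with ⟨h1, h2⟩ | ⟨h1, h2⟩ | ⟨h1, h2⟩ | ⟨h1, h2⟩ <;>
    simp [Prod.ext_iff, h1, h2]

lemma exists_mul_modEq_of_gcd_dvd {a n k : ℤ} (h : (Int.gcd a n : ℤ) ∣ k) :
    ∃ b, a * b ≡ k [ZMOD n] := by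
  obtain ⟨m, rfl⟩ := h
  refine ⟨Int.gcdA a n * m, Int.modEq_iff_dvd.mpr ⟨Int.gcdB a n * m, ?_⟩⟩
  rw [Int.gcd_eq_gcd_ab]
  ring

lemma five_dvd_and_not_five_dvd_of_not_gcd_dvd {n k : ℤ} (h : ¬ (Int.gcd 5 n : ℤ) ∣ k) :
    5 ∣ n ∧ ¬ 5 ∣ k := by
  have hgcd : Int.gcd 5 n ∣ 5 := Int.natCast_dvd_natCast.mp (Int.gcd_dvd_left 5 n)
  rcases (Nat.dvd_prime Nat.prime_five).mp hgcd with h1 | h5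
  · exact absurd (by simp [h1]) h
  · rw [h5] at h
    exact ⟨by exact_mod_cast h5 ▸ Int.gcd_dvd_right 5 n, by exact_mod_cast h⟩

variable {V : Type*} {G : SimpleGraph V}

def IsEfficientDominatingSet (G : SimpleGraph V) (D : Set V) : Prop :=
  ∀ v, ∃! u, u ∈ D ∧ (u = v ∨ G.Adj v u)

lemma IsEfficientDominatingSet.isIndepSet {D : Set V} (hD : IsEfficientDominatingSet G D) :
    G.IsIndepSet D :=
  fun u hu _ hv _ huv => G.ne_of_adj huv ((hD u).unique ⟨hu, Or.inl rfl⟩ ⟨hv, Or.inr huv⟩)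

namespace ProperLabeling

variable {ℓ : V → ℤ}

lemma two_le_ncard_range_s15 (hp : ProperLabeling G ℓ) (hf : (Set.range ℓ).Finite) {v w : V}
    (h : G.Adj v w) : 2 ≤ (Set.range ℓ).ncard := by
  rw [← Set.ncard_pair (hp h)]
  exact Set.ncard_le_ncard (Set.pair_subset (Set.mem_range_self v) (Set.mem_range_self w)) hf

lemma eq_of_adj_of_ncard_range_le_two (hp : ProperLabeling G ℓ) (hf : (Set.range ℓ).Finite)
    (h2 : (Set.range ℓ).ncard ≤ 2) {v u w : V} (hu : G.Adj v u) (hw : G.Adj v w) :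
    ℓ u = ℓ w := by
  by_contra huw
  have := (Set.two_lt_ncard hf).mpr
    ⟨ℓ v, ⟨v, rfl⟩, ℓ u, ⟨u, rfl⟩, ℓ w, ⟨w, rfl⟩, hp hu, hp hw, huw⟩
  omega

lemma ite {D : Set V} [DecidablePred (· ∈ D)] {a : ℤ} {c : V → ℤ} (hD : G.IsIndepSet D)
    (hc : ProperLabeling G c) (ha : ∀ v, c v ≠ a) :
    ProperLabeling G fun v => if v ∈ D then a else c v := by
  intro v w h
  dsimp only
  split_ifs with hv hw hw
  · exact absurd h (hD hv hw (G.ne_of_adj h))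
  · exact (ha w).symm
  · exact ha v
  · exact hc h

end ProperLabeling

section LocallyFinite

variable [G.LocallyFinite] {n k : ℤ}

lemma ClosedColoring.of_modEq {ℓ m : V → ℤ} (hm : ClosedColoring G n k m)
    (h : ∀ v, ℓ v ≡ m v [ZMOD n]) : ClosedColoring G n k ℓ :=
  fun v => ((h v).add (Int.ModEq.sum fun u _ => h u)).trans (hm v)

lemma closedColoring_const {d : ℕ} (hG : G.IsRegularOfDegree d) {b : ℤ}
    (hb : (d + 1) * b ≡ k [ZMOD n]) : ClosedColoring G n k fun _ => b := by
  intro v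
  rw [Finset.sum_const, card_neighborFinset_eq_degree, hG.degree_eq v, nsmul_eq_mul]
  convert hb using 1
  ring

lemma IsEfficientDominatingSet.closedColoring {D : Set V} [DecidablePred (· ∈ D)]
    (hD : IsEfficientDominatingSet G D) :
    ClosedColoring G n k fun v => if v ∈ D then k else 0 := by
  intro v
  dsimp only
  obtain ⟨u, ⟨huD, hu⟩, huniq⟩ := hD v
  have hnotMem : ∀ w ∈ G.neighborFinset v, w ≠ u → w ∉ D := fun w hw hwu hwD =>
    hwu (huniq w ⟨hwD, Or.inr ((G.mem_neighborFinset v w).mp hw)⟩)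
  rcases hu with rfl | hvu
  · rw [if_pos huD, Finset.sum_eq_zero fun w hw =>
      if_neg (hnotMem w hw (G.ne_of_adj ((G.mem_neighborFinset u w).mp hw)).symm), add_zero]
  · have hv : v ∉ D := fun hvD => G.ne_of_adj hvu (huniq v ⟨hvD, Or.inl rfl⟩)
    rw [if_neg hv, zero_add, Finset.sum_eq_single_of_mem u ((G.mem_neighborFinset v u).mpr hvu)
      fun w hw hwu => if_neg (hnotMem w hw hwu), if_pos huD]

lemma ClosedColoring.modEq_of_ncard_range_le_two {d : ℕ} (hG : G.IsRegularOfDegree d)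
    {ℓ : V → ℤ} (hc : ClosedColoring G n k ℓ) (hp : ProperLabeling G ℓ)
    (hf : (Set.range ℓ).Finite) (h2 : (Set.range ℓ).ncard ≤ 2) {v w : V} (h : G.Adj v w) :
    (d + 1) * (ℓ v + ℓ w) ≡ 2 * k [ZMOD n] := by
  have hsum : ∀ {v w : V}, G.Adj v w →
      ℓ v + ∑ u ∈ G.neighborFinset v, ℓ u = ℓ v + d * ℓ w := by
    intro v w h
    rw [Finset.sum_congr rfl fun u hu =>
        hp.eq_of_adj_of_ncard_range_le_two hf h2 ((G.mem_neighborFinset v u).mp hu) h,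
      Finset.sum_const, card_neighborFinset_eq_degree, hG.degree_eq v, nsmul_eq_mul]
  have hvw := (hc v).add (hc w)
  rw [hsum h, hsum h.symm] at hvw
  convert hvw using 1 <;> ring

end LocallyFinite

lemma gridGraph_adj_iff {v w : ℤ × ℤ} : gridGraph.Adj v w ↔
    w = (v.1 + 1, v.2) ∨ w = (v.1 - 1, v.2) ∨ w = (v.1, v.2 + 1) ∨ w = (v.1, v.2 - 1) := by
  obtain ⟨v1, v2⟩ := v
  obtain ⟨w1, w2⟩ := w
  simp only [gridGraph, fromRel_adj, ne_eq, Prod.mk.injEq]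
  omega

lemma gridGraph_neighborFinset (v : ℤ × ℤ) : gridGraph.neighborFinset v =
    {(v.1 + 1, v.2), (v.1 - 1, v.2), (v.1, v.2 + 1), (v.1, v.2 - 1)} := by
  ext w
  simp [gridGraph_adj_iff]

lemma gridGraph_isRegularOfDegree : gridGraph.IsRegularOfDegree 4 := fun v => by
  rw [← card_neighborFinset_eq_degree, gridGraph_neighborFinset,
    Finset.card_insert_of_notMem, Finset.card_insert_of_notMem, Finset.card_pair]
  all_goals simp only [Finset.mem_insert, Finset.mem_singleton, Prod.mk.injEq, ne_eq, not_or]; omega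

lemma gridGraph_adj_origin : gridGraph.Adj (0, 0) (1, 0) :=
  gridGraph_adj_iff.mpr (Or.inl (by norm_num))

def checkerboard (x y : ℤ) (p : ℤ × ℤ) : ℤ := if Even (p.1 + p.2) then x else y

lemma properLabeling_checkerboard {x y : ℤ} (hxy : x ≠ y) :
    ProperLabeling gridGraph (checkerboard x y) := by
  intro v w h
  rcases gridGraph_adj_iff.mp h with rfl | rfl | rfl | rfl <;>
    simp only [checkerboard, Int.even_iff] <;> split_ifs <;> omega

lemma checkerboard_modEq {n x y : ℤ} (hxy : y ≡ x [ZMOD n]) (p : ℤ × ℤ) :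
    checkerboard x y p ≡ x [ZMOD n] := by
  unfold checkerboard
  split_ifs
  exacts [rfl, hxy]

lemma range_checkerboard (x y : ℤ) : Set.range (checkerboard x y) = {x, y} := by
  ext z
  simp only [Set.mem_range, Set.mem_insert_iff, Set.mem_singleton_iff]
  constructor
  · rintro ⟨p, rfl⟩
    unfold checkerboard
    split_ifs <;> simp
  · rintro (rfl | rfl)
    exacts [⟨(0, 0), by simp [checkerboard]⟩, ⟨(1, 0), by simp [checkerboard]⟩]

def gridCode : Set (ℤ × ℤ) := {p | 5 ∣ p.1 + 2 * p.2}

instance : DecidablePred (· ∈ gridCode) := fun p =>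
  inferInstanceAs (Decidable (5 ∣ p.1 + 2 * p.2))

/-- If `x + 2y = s` at `v`, it takes the values `s, s ± 1, s ± 2` on the closed neighbourhood
of `v`: a complete residue system modulo `5`. -/
lemma isEfficientDominatingSet_gridCode : IsEfficientDominatingSet gridGraph gridCode := by
  intro v
  simp only [gridCode, Set.mem_ofPred_eq, gridGraph_adj_iff]
  obtain ⟨a, b⟩ := v
  refine existsUnique_of_exists_of_unique ?_ ?_
  · have : (a + 2 * b) % 5 = 0 ∨ (a + 2 * b) % 5 = 1 ∨ (a + 2 * b) % 5 = 2 ∨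
        (a + 2 * b) % 5 = 3 ∨ (a + 2 * b) % 5 = 4 := by omega
    rcases this with h | h | h | h | h
    exacts [⟨(a, b), by omega, by simp⟩, ⟨(a - 1, b), by simp; omega, by simp⟩,
      ⟨(a, b - 1), by simp; omega, by simp⟩, ⟨(a, b + 1), by simp; omega, by simp⟩,
      ⟨(a + 1, b), by simp; omega, by simp⟩]
  · rintro ⟨c, d⟩ ⟨e, f⟩ ⟨hcd, hcd'⟩ ⟨hef, hef'⟩
    simp only [Prod.mk.injEq] at hcd hcd' hef hef' ⊢
    omega

def codeCheckerboard (a n : ℤ) (p : ℤ × ℤ) : ℤ :=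
  if p ∈ gridCode then a else checkerboard 0 n p

lemma properLabeling_codeCheckerboard {a n : ℤ} (ha : 0 < a) (han : a < n) :
    ProperLabeling gridGraph (codeCheckerboard a n) :=
  ProperLabeling.ite isEfficientDominatingSet_gridCode.isIndepSet
    (properLabeling_checkerboard (by omega)) fun p => by unfold checkerboard; split_ifs <;> omega

lemma closedColoring_codeCheckerboard {n k : ℤ} :
    ClosedColoring gridGraph n k (codeCheckerboard (k % n) n) :=
  isEfficientDominatingSet_gridCode.closedColoring.of_modEq fun p => by
    unfold codeCheckerboard
    split_ifs
    exacts [Int.mod_modEq k n, checkerboard_modEq (Int.modEq_zero_iff_dvd.mpr dvd_rfl) p]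

lemma range_codeCheckerboard (a n : ℤ) : Set.range (codeCheckerboard a n) = {a, 0, n} := by
  ext z
  simp only [Set.mem_range, Set.mem_insert_iff, Set.mem_singleton_iff]
  constructor
  · rintro ⟨p, rfl⟩
    unfold codeCheckerboard checkerboard
    split_ifs <;> simp
  · rintro (rfl | rfl | rfl)
    exacts [⟨(0, 0), by simp [codeCheckerboard, gridCode]⟩,
      ⟨(1, 1), by simp [codeCheckerboard, gridCode, checkerboard]⟩,
      ⟨(1, 0), by simp [codeCheckerboard, gridCode, checkerboard]⟩]

lemma three_le_ncard_range_of_five_dvd {n k : ℤ} (hn : 5 ∣ n) (hk : ¬ 5 ∣ k)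
    {ℓ : ℤ × ℤ → ℤ} (hp : ProperLabeling gridGraph ℓ)
    (hc : ClosedColoring gridGraph n k ℓ) (hf : (Set.range ℓ).Finite) :
    3 ≤ (Set.range ℓ).ncard := by
  by_contra! h
  have h5 := (hc.modEq_of_ncard_range_le_two gridGraph_isRegularOfDegree hp hf (by omega)
    gridGraph_adj_origin).of_dvd hn |>.dvd
  push_cast at h5
  omega

theorem chi_gridGraph (k : ℤ) (n : ℕ) (hn : 0 < n) :
    ((Int.gcd 5 n : ℤ) ∣ k → HasClosedChrom gridGraph n k 2) ∧
    (¬ (Int.gcd 5 n : ℤ) ∣ k → HasClosedChrom gridGraph n k 3) := by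
  refine ⟨fun hdvd => ?_, fun hndvd => ?_⟩
  · obtain ⟨b, hb⟩ := exists_mul_modEq_of_gcd_dvd hdvd
    have hrange := range_checkerboard b (b + n)
    refine ⟨⟨checkerboard b (b + n), properLabeling_checkerboard (by omega),
        (closedColoring_const gridGraph_isRegularOfDegree hb).of_modEq
          (checkerboard_modEq (Int.add_modulus_modEq_iff.mpr rfl)),
        hrange ▸ Set.toFinite _, ?_⟩,
      fun ℓ hp _ hf => hp.two_le_ncard_range_s15 hf gridGraph_adj_origin⟩
    rw [hrange, Set.ncard_pair (by omega)]
  · obtain ⟨h5n, h5k⟩ := five_dvd_and_not_five_dvd_of_not_gcd_dvd hndvd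
    have hpos : 0 < k % n := lt_of_le_of_ne (Int.emod_nonneg k (by omega))
      fun h => h5k (h5n.trans (Int.dvd_of_emod_eq_zero h.symm))
    have hlt : k % n < n := Int.emod_lt_of_pos k (by omega)
    have hrange := range_codeCheckerboard (k % n) n
    refine ⟨⟨codeCheckerboard (k % n) n, properLabeling_codeCheckerboard hpos hlt,
        closedColoring_codeCheckerboard, hrange ▸ Set.toFinite _, ?_⟩,
      fun ℓ hp hc hf => three_le_ncard_range_of_five_dvd h5n h5k hp hc hf⟩
    rw [hrange, Set.ncard_eq_three]
    exact ⟨_, _, _, by omega, by omega, by omega, rfl⟩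
end
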